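/- arXiv:2602.03711 — 4 statements merged into one kernel-verified Lean document; each statement's English description precedes it below -/
import Mathlib

section
/- Let W > 0, Ξ1 > 0, Ξ3 > 0 and c > 0 be real constants. Then the function Θ(R) = c / (1 − exp(Ξ1 − Ξ3/(2^{R/W} − 1))) is convex on the open interval (0, W·log₂(1 + Ξ3/Ξ1)). -/
open Real Set

/-!
Substituting `x = R log 2 / W` reduces the claim to the convexity of `g ∘ s` on
`(0, log (1 + b / a))`, where `g t = (1 - exp (a - t))⁻¹` and `s x = b / (exp x - 1)`; the
interval is exactly where `s > a`. With `E = exp x` and `q = exp (a - s x)`, the second derivative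
`g''(s) s'^2 + g'(s) s''` is a positive multiple of `(1 + q) s E - (1 - q) (E + 1)`. This is
nonnegative since `E + 1 ≤ 2 E` and `2 (1 - exp (-w)) ≤ w (1 + exp (-w))` for `w = s - a ≥ 0`.
-/

/-- Equivalently, `tanh (w / 2) ≤ w / 2`. -/
theorem two_mul_one_sub_exp_neg_le {w : ℝ} (hw : 0 ≤ w) :
    2 * (1 - exp (-w)) ≤ w * (1 + exp (-w)) := by
  let φ : ℝ → ℝ := fun t => t * (1 + exp (-t)) - 2 * (1 - exp (-t))
  have hφ : ∀ t, HasDerivAt φ (1 - (t + 1) * exp (-t)) t := fun t => by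
    have he := (hasDerivAt_neg t).exp
    exact (((hasDerivAt_id' t).mul (he.const_add 1)).sub
      ((he.const_sub 1).const_mul 2)).congr_deriv (by ring)
  have hφ' : ∀ t, 0 ≤ 1 - (t + 1) * exp (-t) := fun t => by
    have := mul_le_mul_of_nonneg_right (add_one_le_exp t) (exp_pos (-t)).le
    rw [← exp_add, add_neg_cancel, exp_zero] at this
    linarith
  have := monotone_of_hasDerivAt_nonneg hφ hφ' hw
  simpa [φ] using this

theorem one_sub_exp_sub_mul_le {a s E : ℝ} (ha : 0 ≤ a) (has : a ≤ s) (hE : 1 ≤ E) :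
    (1 - exp (a - s)) * (E + 1) ≤ (1 + exp (a - s)) * s * E := by
  have hq : exp (a - s) ≤ 1 := exp_le_one_iff.2 (sub_nonpos.2 has)
  have key := two_mul_one_sub_exp_neg_le (sub_nonneg.2 has)
  rw [neg_sub] at key
  calc (1 - exp (a - s)) * (E + 1) ≤ 2 * (1 - exp (a - s)) * E := by nlinarith
    _ ≤ (s - a) * (1 + exp (a - s)) * E := by gcongr
    _ ≤ s * (1 + exp (a - s)) * E := by gcongr; linarith
    _ = (1 + exp (a - s)) * s * E := by ring

theorem convexOn_comp_of_hasDerivAt2 {D : Set ℝ} (hD : Convex ℝ D) (hDo : IsOpen D)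
    {g g' g'' s s' s'' : ℝ → ℝ}
    (hs : ∀ x ∈ D, HasDerivAt s (s' x) x) (hs' : ∀ x ∈ D, HasDerivAt s' (s'' x) x)
    (hg : ∀ x ∈ D, HasDerivAt g (g' (s x)) (s x))
    (hg' : ∀ x ∈ D, HasDerivAt g' (g'' (s x)) (s x))
    (h₀ : ∀ x ∈ D, 0 ≤ g'' (s x) * s' x ^ 2 + g' (s x) * s'' x) :
    ConvexOn ℝ D (g ∘ s) := by
  have hgs x (hx : x ∈ D) : HasDerivAt (g ∘ s) (g' (s x) * s' x) x := (hg x hx).comp x (hs x hx)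
  refine convexOn_of_hasDerivWithinAt2_nonneg (f' := fun x => g' (s x) * s' x) hD
    (fun x hx => (hgs x hx).continuousAt.continuousWithinAt) (fun x hx => ?_) (fun x hx => ?_)
    (by rwa [hDo.interior_eq])
  all_goals rw [hDo.interior_eq] at hx ⊢
  · exact (hgs x hx).hasDerivWithinAt
  · have := ((hg' x hx).comp x (hs x hx)).mul (hs' x hx)
    exact (this.congr_deriv (by simp only [Function.comp_apply]; ring)).hasDerivWithinAt

theorem hasDerivAt_div_exp_sub_one (b : ℝ) {x : ℝ} (hx : x ≠ 0) :
    HasDerivAt (fun x => b / (exp x - 1)) (-(b * exp x) / (exp x - 1) ^ 2) x := by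
  have hE : exp x - 1 ≠ 0 := by rwa [sub_ne_zero, Ne, exp_eq_one_iff]
  exact ((hasDerivAt_const x b).fun_div ((hasDerivAt_exp x).sub_const 1) hE).congr_deriv
    (by ring)

theorem hasDerivAt_neg_mul_exp_div_exp_sub_one_sq (b : ℝ) {x : ℝ} (hx : x ≠ 0) :
    HasDerivAt (fun x => -(b * exp x) / (exp x - 1) ^ 2)
      (b * exp x * (exp x + 1) / (exp x - 1) ^ 3) x := by
  have hE : exp x - 1 ≠ 0 := by rwa [sub_ne_zero, Ne, exp_eq_one_iff]
  have := ((hasDerivAt_exp x).const_mul b).fun_neg.fun_div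
    (((hasDerivAt_exp x).sub_const 1).fun_pow 2) (pow_ne_zero 2 hE)
  exact this.congr_deriv (by field_simp; ring)

theorem hasDerivAt_inv_one_sub_exp_sub (a : ℝ) {t : ℝ} (ht : t ≠ a) :
    HasDerivAt (fun t => (1 - exp (a - t))⁻¹) (-exp (a - t) / (1 - exp (a - t)) ^ 2) t := by
  have hq : 1 - exp (a - t) ≠ 0 := by
    rw [sub_ne_zero, ne_comm, Ne, exp_eq_one_iff, sub_eq_zero]
    exact ht.symm
  exact (((((hasDerivAt_id' t).const_sub a).exp).const_sub 1).fun_inv hq).congr_deriv (by ring)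

theorem hasDerivAt_neg_exp_sub_div_one_sub_exp_sub_sq (a : ℝ) {t : ℝ} (ht : t ≠ a) :
    HasDerivAt (fun t => -exp (a - t) / (1 - exp (a - t)) ^ 2)
      (exp (a - t) * (1 + exp (a - t)) / (1 - exp (a - t)) ^ 3) t := by
  have hq : 1 - exp (a - t) ≠ 0 := by
    rw [sub_ne_zero, ne_comm, Ne, exp_eq_one_iff, sub_eq_zero]
    exact ht.symm
  have he := ((hasDerivAt_id' t).const_sub a).exp
  have := he.fun_neg.fun_div ((he.const_sub 1).fun_pow 2) (pow_ne_zero 2 hq)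
  exact this.congr_deriv (by field_simp; ring)

theorem convexOn_inv_one_sub_exp_sub_div_exp_sub_one {a b : ℝ} (ha : 0 < a) (hb : 0 < b) :
    ConvexOn ℝ (Ioo 0 (log (1 + b / a))) (fun x => (1 - exp (a - b / (exp x - 1)))⁻¹) := by
  have hdom : ∀ x ∈ Ioo 0 (log (1 + b / a)), 1 < exp x ∧ a < b / (exp x - 1) := by
    rintro x ⟨hx0, hx1⟩
    have hE : 1 < exp x := one_lt_exp_iff.2 hx0
    have hEb : exp x < 1 + b / a := (lt_log_iff_exp_lt (by positivity)).1 hx1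
    refine ⟨hE, ?_⟩
    rwa [lt_div_iff₀ (sub_pos.2 hE), ← lt_div_iff₀' ha, sub_lt_iff_lt_add']
  refine convexOn_comp_of_hasDerivAt2 (g := fun t => (1 - exp (a - t))⁻¹)
    (g' := fun t => -exp (a - t) / (1 - exp (a - t)) ^ 2)
    (g'' := fun t => exp (a - t) * (1 + exp (a - t)) / (1 - exp (a - t)) ^ 3)
    (s := fun x => b / (exp x - 1))
    (s' := fun x => -(b * exp x) / (exp x - 1) ^ 2) (convex_Ioo _ _) isOpen_Ioo
    (fun x hx => hasDerivAt_div_exp_sub_one b hx.1.ne')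
    (fun x hx => hasDerivAt_neg_mul_exp_div_exp_sub_one_sq b hx.1.ne')
    (fun x hx => hasDerivAt_inv_one_sub_exp_sub a (hdom x hx).2.ne')
    (fun x hx => hasDerivAt_neg_exp_sub_div_one_sub_exp_sub_sq a (hdom x hx).2.ne') ?_
  intro x hx
  obtain ⟨hE, hs⟩ := hdom x hx
  have key := one_sub_exp_sub_mul_le ha.le hs.le hE.le
  set E := exp x
  set s := b / (E - 1) with hs_def
  set q := exp (a - s)
  have hq : q < 1 := exp_lt_one_iff.2 (by linarith)
  have hE1 : E - 1 ≠ 0 := by linarith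
  have hq1 : 1 - q ≠ 0 := by linarith
  have hb : b = s * (E - 1) := by rw [hs_def, div_mul_cancel₀ _ hE1]
  rw [hb]
  calc (0 : ℝ)
        ≤ q * s * E / ((1 - q) ^ 3 * (E - 1) ^ 2) * ((1 + q) * s * E - (1 - q) * (E + 1)) := by
        refine mul_nonneg (div_nonneg ?_ ?_) (sub_nonneg.2 key)
        · exact mul_nonneg (mul_nonneg (exp_pos _).le (by linarith)) (by linarith)
        · exact mul_nonneg (pow_nonneg (by linarith) 3) (sq_nonneg _)
    _ = _ := by field_simp; ring

theorem stmt_0 (W Ξ1 Ξ3 c : ℝ) (hW : 0 < W) (hΞ1 : 0 < Ξ1) (hΞ3 : 0 < Ξ3) (hc : 0 < c) :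
    ConvexOn ℝ (Set.Ioo 0 (W * Real.logb 2 (1 + Ξ3 / Ξ1)))
      (fun R : ℝ => c / (1 - Real.exp (Ξ1 - Ξ3 / ((2 : ℝ) ^ (R / W) - 1)))) := by
  set A := log 2 / W with hA_def
  have hA : 0 < A := div_pos (log_pos one_lt_two) hW
  have hconv := ((convexOn_inv_one_sub_exp_sub_div_exp_sub_one hΞ1 hΞ3).comp_linearMap
    (A • LinearMap.id)).smul hc.le
  have hset : (A • LinearMap.id : ℝ →ₗ[ℝ] ℝ) ⁻¹' Ioo 0 (log (1 + Ξ3 / Ξ1)) =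
      Ioo 0 (W * logb 2 (1 + Ξ3 / Ξ1)) := by
    change (A * ·) ⁻¹' _ = _
    rw [preimage_const_mul_Ioo₀ _ _ hA, zero_div, logb, hA_def]
    field_simp
  rw [hset] at hconv
  refine hconv.congr fun R _ => ?_
  simp only [Function.comp_apply, LinearMap.smul_apply, LinearMap.id_apply, smul_eq_mul]
  rw [rpow_def_of_pos two_pos, hA_def, div_mul_eq_mul_div, mul_div_assoc, div_eq_mul_inv c]
end

section
/- Let W > 0 be a real constant. Then the function g(R) = exp(−(2^{R/W} − 1)) is convex on the interval [0, ∞). -/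
/-!
Writing `2 ^ (R / W) = exp (c R)` with `c = log 2 / W ≥ 0` and `u = exp (c R)`, the function is
`exp (1 - u)` and its second derivative is `c² u (u - 1) exp (1 - u)`, which is nonnegative
because `u ≥ 1` for `R ≥ 0`.
-/

open Real Set

lemma hasDerivAt_exp_one_sub_exp_mul (c x : ℝ) :
    HasDerivAt (fun x => exp (1 - exp (c * x)))
      (-c * exp (c * x) * exp (1 - exp (c * x))) x := by
  refine (((hasDerivAt_id' x).const_mul c).exp.const_sub 1).exp.congr_deriv ?_
  ring

lemma hasDerivAt_neg_mul_exp_mul_mul_exp_one_sub_exp_mul (c x : ℝ) :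
    HasDerivAt (fun x => -c * exp (c * x) * exp (1 - exp (c * x)))
      (c ^ 2 * exp (c * x) * (exp (c * x) - 1) * exp (1 - exp (c * x))) x := by
  refine ((((hasDerivAt_id' x).const_mul c).exp.const_mul (-c)).mul
    (hasDerivAt_exp_one_sub_exp_mul c x)).congr_deriv ?_
  ring

theorem convexOn_exp_one_sub_exp_mul {c : ℝ} (hc : 0 ≤ c) :
    ConvexOn ℝ (Ici 0) (fun x => exp (1 - exp (c * x))) := by
  refine convexOn_of_hasDerivWithinAt2_nonneg (convex_Ici 0) (by fun_prop)
    (fun x _ => (hasDerivAt_exp_one_sub_exp_mul c x).hasDerivWithinAt)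
    (fun x _ => (hasDerivAt_neg_mul_exp_mul_mul_exp_one_sub_exp_mul c x).hasDerivWithinAt)
    fun x hx => ?_
  rw [interior_Ici, mem_Ioi] at hx
  have hu : 0 ≤ exp (c * x) - 1 := sub_nonneg.mpr (one_le_exp (mul_nonneg hc hx.le))
  positivity

theorem stmt_1 (W : ℝ) (hW : 0 < W) :
    ConvexOn ℝ (Set.Ici 0)
      (fun R : ℝ => Real.exp (-((2 : ℝ) ^ (R / W) - 1))) := by
  have hc : 0 ≤ log 2 / W := div_nonneg (log_nonneg one_le_two) hW.le
  convert convexOn_exp_one_sub_exp_mul hc using 2 with R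
  rw [rpow_def_of_pos two_pos]
  ring_nf
end

section
/- Let Ξ1 > 0 and Ξ3 > 0 be real constants and define, for f in the open interval (1, 1 + Ξ3/Ξ1), e(f) = exp(Ξ1 − Ξ3/(f − 1)) and Λ(f) = (f/(f² − 1))·(1 + e(f))/(1 − e(f)) − 1/Ξ3. Then Λ(f) tends to +∞ as f tends to 1 + Ξ3/Ξ1 from the left (within the interval). -/
/-! The exponent `Ξ1 - Ξ3 / (f - 1)` vanishes at `f = 1 + Ξ3 / Ξ1` and is negative to its left, so
`e(f) → 1⁻` and `(1 + e) / (1 - e) → +∞`, while the prefactor `f / (f ^ 2 - 1)` tends to a positive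
constant. -/

open Filter Real Set Topology

lemma tendsto_one_sub_exp_nhdsLT_zero :
    Tendsto (fun x : ℝ => 1 - exp x) (𝓝[<] 0) (𝓝[>] 0) := by
  refine tendsto_nhdsWithin_iff.2 ⟨?_, ?_⟩
  · refine tendsto_nhdsWithin_of_tendsto_nhds ?_
    simpa using (continuous_exp.tendsto 0).const_sub 1
  · filter_upwards [self_mem_nhdsWithin] with x hx
    simpa using exp_lt_one_iff.2 hx

lemma tendsto_one_add_exp_div_one_sub_exp_nhdsLT_zero :
    Tendsto (fun x : ℝ => (1 + exp x) / (1 - exp x)) (𝓝[<] 0) atTop := by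
  have hnum : Tendsto (fun x : ℝ => 1 + exp x) (𝓝[<] 0) (𝓝 2) := by
    refine tendsto_nhdsWithin_of_tendsto_nhds ?_
    simpa [one_add_one_eq_two] using (continuous_exp.tendsto 0).const_add 1
  exact hnum.pos_mul_atTop two_pos (tendsto_inv_nhdsGT_zero.comp tendsto_one_sub_exp_nhdsLT_zero)

lemma tendsto_sub_div_sub_one_nhdsLT {a b : ℝ} (ha : 0 < a) (hb : 0 < b) :
    Tendsto (fun x : ℝ => a - b / (x - 1)) (𝓝[<] (1 + b / a)) (𝓝[<] 0) := by
  have hba : 0 < b / a := div_pos hb ha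
  refine tendsto_nhdsWithin_iff.2 ⟨?_, ?_⟩
  · refine tendsto_nhdsWithin_of_tendsto_nhds ?_
    have hcont : ContinuousAt (fun x : ℝ => a - b / (x - 1)) (1 + b / a) := by
      fun_prop (disch := simpa using hba.ne')
    convert hcont.tendsto using 2
    field_simp [hb.ne']
    ring
  · filter_upwards [Ioo_mem_nhdsLT (lt_add_of_pos_right 1 hba)] with x ⟨hx1, hxc⟩
    have hx : 0 < x - 1 := sub_pos.2 hx1
    rw [mem_Iio, sub_neg, lt_div_iff₀ hx]
    rw [← sub_lt_iff_lt_add', lt_div_iff₀ ha] at hxc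
    linarith

theorem stmt_12 (Ξ1 Ξ3 : ℝ) (hΞ1 : 0 < Ξ1) (hΞ3 : 0 < Ξ3) :
    Filter.Tendsto
      (fun f : ℝ =>
        (f / (f ^ 2 - 1)) * ((1 + Real.exp (Ξ1 - Ξ3 / (f - 1))) /
          (1 - Real.exp (Ξ1 - Ξ3 / (f - 1)))) - 1 / Ξ3)
      (nhdsWithin (1 + Ξ3 / Ξ1) (Set.Ioo 1 (1 + Ξ3 / Ξ1))) Filter.atTop := by
  set c := 1 + Ξ3 / Ξ1
  have hc : 1 < c := lt_add_of_pos_right 1 (div_pos hΞ3 hΞ1)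
  have hc2 : 0 < c ^ 2 - 1 := by nlinarith
  have hprefactor : Tendsto (fun f : ℝ => f / (f ^ 2 - 1)) (𝓝[<] c) (𝓝 (c / (c ^ 2 - 1))) := by
    refine tendsto_nhdsWithin_of_tendsto_nhds (ContinuousAt.tendsto ?_)
    fun_prop (disch := exact hc2.ne')
  have hprod := hprefactor.pos_mul_atTop (div_pos (by linarith) hc2)
    (tendsto_one_add_exp_div_one_sub_exp_nhdsLT_zero.comp (tendsto_sub_div_sub_one_nhdsLT hΞ1 hΞ3))
  rw [nhdsWithin_Ioo_eq_nhdsLT hc]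
  exact tendsto_atTop_add_const_right _ (-(1 / Ξ3)) hprod
end

section
/- Let Ξ1 > 0 and Ξ3 > 0 be real constants and define, for f in the open interval (1, 1 + Ξ3/Ξ1), e(f) = exp(Ξ1 − Ξ3/(f − 1)) and Λ(f) = (f/(f² − 1))·(1 + e(f))/(1 − e(f)) − 1/Ξ3. Then Λ(f) > 0 for every f in the open interval (1, 1 + Ξ3/Ξ1). -/
/-!
With `x = Ξ3 / (f - 1) - Ξ1 > 0` the exponential is `exp (-x)`, and
`(1 + exp (-x)) / (1 - exp (-x)) = coth (x / 2) > 2 / x`. Since `(f - 1) x = Ξ3 - Ξ1 (f - 1) < Ξ3`,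
this bounds the first term below by `2 f / ((f + 1) Ξ3)`, which exceeds `1 / Ξ3` because `f > 1`.
-/

open Real

lemma two_mul_one_sub_exp_neg_lt {x : ℝ} (hx : 0 < x) :
    2 * (1 - exp (-x)) < x * (1 + exp (-x)) := by
  let g : ℝ → ℝ := fun y => y - 2 + (y + 2) * exp (-y)
  have hg_deriv (y : ℝ) : HasDerivAt g (1 - (y + 1) * exp (-y)) y := by
    have := (((hasDerivAt_id y).sub_const 2).add
      (((hasDerivAt_id y).add_const 2).mul (hasDerivAt_neg y).exp))
    exact this.congr_deriv (by simp only [id]; ring)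
  have hg_mono : StrictMonoOn g (Set.Ici 0) := by
    refine strictMonoOn_of_deriv_pos (convex_Ici 0)
      (fun y _ => (hg_deriv y).continuousAt.continuousWithinAt) fun y hy => ?_
    rw [interior_Ici] at hy
    -- `(y + 1) e^{-y} < 1` is `y + 1 < e^y`
    have h := mul_lt_mul_of_pos_right (add_one_lt_exp hy.ne') (exp_pos (-y))
    rw [← exp_add, add_neg_cancel, exp_zero] at h
    rw [(hg_deriv y).deriv]
    linarith
  have hgx : g 0 < g x := hg_mono Set.self_mem_Ici hx.le hx
  norm_num [g] at hgx
  linarith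

lemma two_div_lt_one_add_exp_neg_div_one_sub_exp_neg {x : ℝ} (hx : 0 < x) :
    2 / x < (1 + exp (-x)) / (1 - exp (-x)) := by
  have h : 0 < 1 - exp (-x) := by
    rw [sub_pos, exp_lt_one_iff]
    linarith
  rw [div_lt_div_iff₀ hx h]
  linarith [two_mul_one_sub_exp_neg_lt hx]

theorem stmt_13 (Ξ1 Ξ3 : ℝ) (hΞ1 : 0 < Ξ1) (hΞ3 : 0 < Ξ3) :
    ∀ f ∈ Set.Ioo (1 : ℝ) (1 + Ξ3 / Ξ1),
      (f / (f ^ 2 - 1)) * ((1 + Real.exp (Ξ1 - Ξ3 / (f - 1))) /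
        (1 - Real.exp (Ξ1 - Ξ3 / (f - 1)))) - 1 / Ξ3 > 0 := by
  rintro f ⟨hf_gt, hf_lt⟩
  have hf1 : 0 < f - 1 := by linarith
  set x := Ξ3 / (f - 1) - Ξ1 with hx_def
  have hx_mul : (f - 1) * x = Ξ3 - Ξ1 * (f - 1) := by
    rw [hx_def, mul_sub, mul_div_cancel₀ _ hf1.ne']; ring
  have hx : 0 < x := by
    have : f - 1 < Ξ3 / Ξ1 := by linarith
    rw [lt_div_iff₀' hΞ1] at this
    exact pos_of_mul_pos_right (by linarith) hf1.le
  have hx_lt : (f - 1) * x < Ξ3 := by linarith [mul_pos hΞ1 hf1]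
  rw [show Ξ1 - Ξ3 / (f - 1) = -x by ring, gt_iff_lt, sub_pos]
  calc 1 / Ξ3 < 2 * f / ((f + 1) * Ξ3) := by
        rw [div_lt_div_iff₀ hΞ3 (by positivity)]; nlinarith
    _ < 2 * f / ((f + 1) * ((f - 1) * x)) := by gcongr
    _ = f / (f ^ 2 - 1) * (2 / x) := by
        rw [show f ^ 2 - 1 = (f + 1) * (f - 1) by ring]; field_simp
    _ < f / (f ^ 2 - 1) * ((1 + exp (-x)) / (1 - exp (-x))) :=
        mul_lt_mul_of_pos_left (two_div_lt_one_add_exp_neg_div_one_sub_exp_neg hx)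
          (div_pos (by linarith) (by nlinarith))
end
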